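/- arXiv:2011.07587 — 8 statements merged into one kernel-verified Lean document; each statement's English description precedes it below -/
import Mathlib

section
/- For any constant K > 0, the function v*(r) = sqrt(1 - K^2(1 - 2M/r)) is a stationary solution of the relativistic Burgers–Schwarzschild equation, i.e. it satisfies d/dr[(1 - 2M/r)(v*(r)^2 - 1)/2] = (2M/r^2)(v*(r)^2 - 1) for all r > 2M in its domain of definition. -/
/- On the domain `v*² - 1 = -K² (1 - 2M/r)`, so the flux is `-(K²/2)(1 - 2M/r)²` and the
stationary equation is the chain rule for it. -/

lemma hasDerivAt_one_sub_const_div {c r : ℝ} (hr : r ≠ 0) :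
    HasDerivAt (fun s => 1 - c / s) (c / r ^ 2) r := by
  simpa [div_eq_mul_inv] using ((hasDerivAt_inv hr).const_mul c).const_sub 1

lemma HasDerivAt.mul_const_mul_self_div_two {f : ℝ → ℝ} {f' r : ℝ} (a : ℝ)
    (hf : HasDerivAt f f' r) :
    HasDerivAt (fun s => f s * (a * f s) / 2) (f' * (a * f r)) r :=
  ((hf.mul (hf.const_mul a)).div_const 2).congr_deriv (by ring)

theorem stmt0_general (M K : ℝ) (hM : 0 < M)
    (vstar : ℝ → ℝ)
    (hv : ∀ r, vstar r = Real.sqrt (1 - K^2 * (1 - 2*M/r)))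
    (D : Set ℝ)
    (hD : D = {r : ℝ | 2*M < r ∧ 0 ≤ 1 - K^2 * (1 - 2*M/r)}) :
    ∀ r ∈ D, HasDerivWithinAt
      (fun s => (1 - 2*M/s) * ((vstar s)^2 - 1) / 2)
      (2*M/r^2 * ((vstar r)^2 - 1)) D r := by
  intro r hr
  have hsq : ∀ s ∈ D, vstar s ^ 2 - 1 = -K ^ 2 * (1 - 2 * M / s) := by
    intro s hs
    rw [hD] at hs
    rw [hv, Real.sq_sqrt hs.2]
    ring
  have hr0 : r ≠ 0 := by
    rw [hD] at hr
    exact (by linarith [hr.1] : 0 < r).ne'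
  have hflux := ((hasDerivAt_one_sub_const_div (c := 2 * M) hr0).mul_const_mul_self_div_two
    (-K ^ 2)).hasDerivWithinAt (s := D)
  rw [← hsq r hr] at hflux
  exact hflux.congr (fun s hs => by simp only [hsq s hs]) (by simp only [hsq r hr])

/-- For any constant `K > 0`, the function `v*(r) = √(1 - K²(1 - 2M/r))` is a stationary
solution of the relativistic Burgers–Schwarzschild equation: it satisfies
`d/dr [(1 - 2M/r)(v*(r)² - 1)/2] = (2M/r²)(v*(r)² - 1)` on its domain of definition
`{r | 2M < r ∧ 0 ≤ 1 - K²(1 - 2M/r)}`. -/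
theorem stmt0 (M K : ℝ) (hM : 0 < M) (hK : 0 < K)
    (vstar : ℝ → ℝ)
    (hv : ∀ r, vstar r = Real.sqrt (1 - K^2 * (1 - 2*M/r)))
    (D : Set ℝ)
    (hD : D = {r : ℝ | 2*M < r ∧ 0 ≤ 1 - K^2 * (1 - 2*M/r)}) :
    ∀ r ∈ D, HasDerivWithinAt
      (fun s => (1 - 2*M/s) * ((vstar s)^2 - 1) / 2)
      (2*M/r^2 * ((vstar r)^2 - 1)) D r :=
  stmt0_general M K hM vstar hv D hD
end

section
/- For k ∈ (0,1) and any real K_a with |K_a| < (1-k^2)k^{2k^2/(1-k^2)} and K_a ≠ 0, the equation sign(v)(1 - v^2)|v|^{2k^2/(1-k^2)} = K_a has exactly two solutions v in (-1,1)\{0}, one with |v| < k (subsonic) and one with |v| > k (supersonic). -/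
noncomputable def gfun (k v : ℝ) : ℝ :=
  Real.sign v * (1 - v^2) * |v| ^ (2*k^2/(1-k^2))

/-!
On `v > 0` the function `g` is `(1 - v²) v^α` with `α = 2k²/(1-k²)`, whose derivative
`v^(α-1) (α - (α+2) v²)` vanishes only at `v = k`, since `(α + 2) k² = α`. So `g` rises from `0`
to its maximum on `[0, k]` and falls back to `0` on `[k, 1]`; each level strictly between is
taken once on each side. As `g` is odd and negative on `(-1, 0)`, negative levels are handled
by symmetry.
-/

open Set

section Profile

variable {α : ℝ}

theorem hasDerivAt_one_sub_sq_mul_rpow {x : ℝ} (hx : 0 < x) :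
    HasDerivAt (fun v : ℝ => (1 - v^2) * v ^ α) (x ^ (α - 1) * (α - (α + 2) * x^2)) x := by
  have h := ((hasDerivAt_pow 2 x).const_sub 1).mul
    (Real.hasDerivAt_rpow_const (p := α) (Or.inl hx.ne'))
  refine h.congr_deriv ?_
  rw [show x ^ α = x ^ (α - 1) * x by rw [← Real.rpow_add_one hx.ne', sub_add_cancel]]
  push_cast
  ring

theorem continuous_one_sub_sq_mul_rpow (hα : 0 ≤ α) :
    Continuous fun v : ℝ => (1 - v^2) * v ^ α :=
  (continuous_const.sub (continuous_pow 2)).mul (Real.continuous_rpow_const hα)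

theorem strictMonoOn_one_sub_sq_mul_rpow (hα : 0 ≤ α) {c : ℝ} (hc : (α + 2) * c^2 ≤ α) :
    StrictMonoOn (fun v : ℝ => (1 - v^2) * v ^ α) (Icc 0 c) := by
  refine strictMonoOn_of_deriv_pos (convex_Icc 0 c)
    (continuous_one_sub_sq_mul_rpow hα).continuousOn fun x hx => ?_
  rw [interior_Icc] at hx
  rw [(hasDerivAt_one_sub_sq_mul_rpow hx.1).deriv]
  have hx2 : x^2 < c^2 := by nlinarith [hx.1, hx.2]
  exact mul_pos (Real.rpow_pos_of_pos hx.1 _) (by nlinarith)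

theorem strictAntiOn_one_sub_sq_mul_rpow (hα : 0 ≤ α) {c : ℝ} (hc0 : 0 < c)
    (hc : α ≤ (α + 2) * c^2) :
    StrictAntiOn (fun v : ℝ => (1 - v^2) * v ^ α) (Ici c) := by
  refine strictAntiOn_of_deriv_neg (convex_Ici c)
    (continuous_one_sub_sq_mul_rpow hα).continuousOn fun x hx => ?_
  rw [interior_Ici] at hx
  have hx0 : 0 < x := hc0.trans hx
  rw [(hasDerivAt_one_sub_sq_mul_rpow hx0).deriv]
  have hx2 : c^2 < x^2 := by nlinarith [mem_Ioi.1 hx]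
  exact mul_neg_of_pos_of_neg (Real.rpow_pos_of_pos hx0 _) (by nlinarith)

theorem exists_two_roots_one_sub_sq_mul_rpow (hα : 0 < α) {c K : ℝ} (hc0 : 0 < c)
    (hc : (α + 2) * c^2 = α) (hK0 : 0 < K) (hKc : K < (1 - c^2) * c ^ α) :
    ∃ v₁ ∈ Ioo 0 c, ∃ v₂ ∈ Ioo c 1,
      (1 - v₁^2) * v₁ ^ α = K ∧ (1 - v₂^2) * v₂ ^ α = K ∧
      ∀ v, 0 < v → (1 - v^2) * v ^ α = K → v = v₁ ∨ v = v₂ := by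
  set f : ℝ → ℝ := fun v => (1 - v^2) * v ^ α
  have hf : Continuous f := continuous_one_sub_sq_mul_rpow hα.le
  have hc1 : c < 1 := by
    by_contra! h1c
    nlinarith [one_le_pow₀ (n := 2) h1c]
  have hf0 : f 0 = 0 := by simp [f, Real.zero_rpow hα.ne']
  have hf1 : f 1 = 0 := by simp [f]
  obtain ⟨v₁, hv₁, hfv₁⟩ :=
    intermediate_value_Ioo hc0.le hf.continuousOn 
      (show K ∈ Ioo (f 0) (f c) from ⟨by rwa [hf0], hKc⟩)
  obtain ⟨v₂, hv₂, hfv₂⟩ :=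
    intermediate_value_Ioo' hc1.le hf.continuousOn 
      (show K ∈ Ioo (f 1) (f c) from ⟨by rwa [hf1], hKc⟩)
  refine ⟨v₁, hv₁, v₂, hv₂, hfv₁, hfv₂, fun v hv hfv => ?_⟩
  rcases lt_trichotomy v c with hvc | rfl | hvc
  · exact .inl <| (strictMonoOn_one_sub_sq_mul_rpow hα.le hc.le).injOn
      ⟨hv.le, hvc.le⟩ ⟨hv₁.1.le, hv₁.2.le⟩ (hfv.trans hfv₁.symm)
  · exact absurd hfv hKc.ne'
  · exact .inr <| (strictAntiOn_one_sub_sq_mul_rpow hα.le hc0 hc.ge).injOn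
      hvc.le hv₂.1.le (hfv.trans hfv₂.symm)

end Profile

theorem gfun_neg (k v : ℝ) : gfun k (-v) = -gfun k v := by
  rw [gfun, gfun, Real.sign_neg, abs_neg, neg_sq]
  ring

theorem gfun_of_pos (k : ℝ) {v : ℝ} (hv : 0 < v) :
    gfun k v = (1 - v^2) * v ^ (2*k^2/(1-k^2)) := by
  rw [gfun, Real.sign_of_pos hv, abs_of_pos hv, one_mul]

theorem gfun_neg_of_mem_Ioo (k : ℝ) {v : ℝ} (hv : v ∈ Ioo (-1) 0) : gfun k v < 0 := by
  have hv' : 0 < -v := neg_pos.2 hv.2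
  have h1 : 0 < 1 - (-v)^2 := by nlinarith [hv.1]
  have hg := mul_pos h1 (Real.rpow_pos_of_pos hv' (2*k^2/(1-k^2)))
  rw [← neg_neg v, gfun_neg, gfun_of_pos k hv']
  linarith

def HasSubSuperRoots (k K : ℝ) : Prop :=
  ∃ v₁ v₂ : ℝ,
    v₁ ∈ Ioo (-1 : ℝ) 1 ∧ v₁ ≠ 0 ∧ gfun k v₁ = K ∧ |v₁| < k ∧
    v₂ ∈ Ioo (-1 : ℝ) 1 ∧ v₂ ≠ 0 ∧ gfun k v₂ = K ∧ k < |v₂| ∧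
    ∀ v ∈ Ioo (-1 : ℝ) 1, v ≠ 0 → gfun k v = K → v = v₁ ∨ v = v₂

theorem HasSubSuperRoots.neg {k K : ℝ} (h : HasSubSuperRoots k K) :
    HasSubSuperRoots k (-K) := by
  obtain ⟨v₁, v₂, hm₁, hn₁, hg₁, hs₁, hm₂, hn₂, hg₂, hs₂, huniq⟩ := h
  have neg_mem {v : ℝ} (hv : v ∈ Ioo (-1 : ℝ) 1) : -v ∈ Ioo (-1 : ℝ) 1 :=
    ⟨neg_lt_neg hv.2, neg_lt.1 hv.1⟩
  refine ⟨-v₁, -v₂, neg_mem hm₁, neg_ne_zero.2 hn₁, by rw [gfun_neg, hg₁],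
    by rwa [abs_neg], neg_mem hm₂, neg_ne_zero.2 hn₂, by rw [gfun_neg, hg₂],
    by rwa [abs_neg], fun v hv hv0 hgv => ?_⟩
  have hv' := huniq (-v) (neg_mem hv) (neg_ne_zero.2 hv0) (by rw [gfun_neg, hgv, neg_neg])
  rwa [neg_eq_iff_eq_neg, neg_eq_iff_eq_neg] at hv'

theorem hasSubSuperRoots_of_pos {k K : ℝ} (hk : k ∈ Ioo (0 : ℝ) 1) (hK0 : 0 < K)
    (hK : K < (1 - k^2) * k ^ (2*k^2/(1-k^2))) : HasSubSuperRoots k K := by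
  have hk2 : 0 < 1 - k^2 := by nlinarith [hk.1, hk.2]
  have hα : 0 < 2*k^2/(1-k^2) := div_pos (by have := hk.1; positivity) hk2
  have hcrit : (2*k^2/(1-k^2) + 2) * k^2 = 2*k^2/(1-k^2) := by field_simp; ring
  obtain ⟨v₁, hv₁, v₂, hv₂, hg₁, hg₂, huniq⟩ :=
    exists_two_roots_one_sub_sq_mul_rpow hα hk.1 hcrit hK0 hK
  have hv₂0 : 0 < v₂ := hk.1.trans hv₂.1
  refine ⟨v₁, v₂, ⟨by linarith [hv₁.1], hv₁.2.trans hk.2⟩, hv₁.1.ne',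
    (gfun_of_pos k hv₁.1).trans hg₁, (abs_of_pos hv₁.1).trans_lt hv₁.2,
    ⟨by linarith, hv₂.2⟩, hv₂0.ne', (gfun_of_pos k hv₂0).trans hg₂,
    hv₂.1.trans_eq (abs_of_pos hv₂0).symm, fun v hv hv0 hgv => ?_⟩
  have hvpos : 0 < v := by
    by_contra! hle
    exact (gfun_neg_of_mem_Ioo k ⟨hv.1, hle.lt_of_ne hv0⟩).not_gt (hgv ▸ hK0)
  exact huniq v hvpos ((gfun_of_pos k hvpos).symm.trans hgv)

/-- For `k ∈ (0,1)` and `Kₐ` with `0 < |Kₐ| < (1-k²)k^{2k²/(1-k²)}`, the equation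
`g(v) = Kₐ` has exactly two solutions `v ∈ (-1,1) \ {0}`, one subsonic (`|v| < k`)
and one supersonic (`|v| > k`). -/
theorem stmt8 (k Ka : ℝ) (hk : k ∈ Set.Ioo (0:ℝ) 1)
    (hKa : |Ka| < (1 - k^2) * k ^ (2*k^2/(1-k^2))) (hKa0 : Ka ≠ 0) :
    ∃ v₁ v₂ : ℝ,
      v₁ ∈ Set.Ioo (-1 : ℝ) 1 ∧ v₁ ≠ 0 ∧ gfun k v₁ = Ka ∧ |v₁| < k ∧
      v₂ ∈ Set.Ioo (-1 : ℝ) 1 ∧ v₂ ≠ 0 ∧ gfun k v₂ = Ka ∧ k < |v₂| ∧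
      ∀ v ∈ Set.Ioo (-1 : ℝ) 1, v ≠ 0 → gfun k v = Ka → v = v₁ ∨ v = v₂ := by
  rcases hKa0.lt_or_gt with hneg | hpos
  · have h := (hasSubSuperRoots_of_pos hk (neg_pos.2 hneg) (by rwa [abs_of_neg hneg] at hKa)).neg
    rwa [neg_neg] at h
  · exact hasSubSuperRoots_of_pos hk hpos (by rwa [abs_of_pos hpos] at hKa)
end

section
/- A smooth pair (ρ(r), v(r)) with ρ > 0 and 0 < |v| < 1, v ≠ ±k, satisfying the ODE system dv/dr = v(1-v^2)(1-k^2)/(r(r-2M)) · ((2k^2/(1-k^2))(r-2M) - M)/(v^2 - k^2) and dρ/dr = -2(r-M)ρ/(r(r-2M)) - ρ(1+v^2)(1-k^2)/(r(r-2M)) · ((2k^2/(1-k^2))(r-2M) - M)/(v^2 - k^2), keeps the quantities C_1(r) = sign(v)(1-v^2)|v|^{2k^2/(1-k^2)} r^{4k^2/(1-k^2)}/(1 - 2M/r) and C_2(r) = r(r-2M)ρ v/(1-v^2) constant in r on any interval contained in (2M, ∞). -/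
/-!
Both quantities have zero derivative at every point of `s`, so the mean value inequality on the
convex set `s` makes them constant there. Write `a = 2k²/(1-k²)` and `v' = v(1-v²)G`.
The factor `sign v · |v|^a` of `C₁` is the odd power `y ↦ sign y · |y|^a`, whose derivative at
`y ≠ 0` is `a · (sign y · |y|^a) / y`, so the sign causes no trouble. The logarithmic derivative
of `C₁` is then `(a(1-v²) - 2v²)G + (2a+1)/r - 1/(r-2M)`, which vanishes because
`a(1-v²) - 2v² = -2(v²-k²)/(1-k²)`. For `C₂`, the logarithmic derivative of `v/(1-v²)` is
`(1+v²)G`, and together with `2(r-M)/(r(r-2M))` from `r(r-2M)` it cancels that of `ρ`.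
-/

open Topology

theorem Convex.eq_of_forall_hasDerivAt_zero {E : Type*} [NormedAddCommGroup E] [NormedSpace ℝ E]
    {s : Set ℝ} (hs : Convex ℝ s) {f : ℝ → E} (hf : ∀ x ∈ s, HasDerivAt f 0 x)
    {x y : ℝ} (hx : x ∈ s) (hy : y ∈ s) : f x = f y := by
  have h := hs.norm_image_sub_le_of_norm_hasDerivWithin_le (C := 0)
    (fun z hz => (hf z hz).hasDerivWithinAt) (fun _ _ => norm_zero.le) hx hy
  rw [zero_mul, norm_le_zero_iff, sub_eq_zero] at h
  exact h.symm

theorem Real.hasDerivAt_sign_mul_abs_rpow {y : ℝ} (hy : y ≠ 0) (p : ℝ) :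
    HasDerivAt (fun t => Real.sign t * |t| ^ p) (p * (Real.sign y * |y| ^ p) / y) y := by
  rcases hy.lt_or_gt with hneg | hpos
  · have h := ((Real.hasDerivAt_rpow_const (p := p) (Or.inl (neg_ne_zero.mpr hy))).comp y
      (hasDerivAt_neg y)).neg
    have heq : (fun t => Real.sign t * |t| ^ p) =ᶠ[𝓝 y] fun t => -(-t) ^ p := by
      filter_upwards [Iio_mem_nhds hneg] with t ht
      rw [Real.sign_of_neg ht, abs_of_neg ht]
      ring
    refine (h.congr_of_eventuallyEq heq).congr_deriv ?_
    rw [Real.sign_of_neg hneg, abs_of_neg hneg, Real.rpow_sub_one (neg_ne_zero.mpr hy)]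
    field_simp
  · have heq : (fun t => Real.sign t * |t| ^ p) =ᶠ[𝓝 y] fun t => t ^ p := by
      filter_upwards [Ioi_mem_nhds hpos] with t ht
      rw [Real.sign_of_pos ht, abs_of_pos ht, one_mul]
    refine ((Real.hasDerivAt_rpow_const (Or.inl hy)).congr_of_eventuallyEq heq).congr_deriv ?_
    rw [Real.sign_of_pos hpos, abs_of_pos hpos, one_mul, Real.rpow_sub_one hy, mul_div_assoc]

namespace EulerSchwarzschild

noncomputable def velocityRHS (M k r y : ℝ) : ℝ :=
  y * ((1 - y^2) * (1 - k^2)) / (r * (r - 2*M))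
    * ((2*k^2/(1-k^2)) * (r - 2*M) - M) / (y^2 - k^2)

noncomputable def densityRHS (M k r y ρ : ℝ) : ℝ :=
  -(2*(r - M)) / (r * (r - 2*M)) * ρ
    - ρ * ((1 + y^2) * (1 - k^2)) / (r * (r - 2*M))
      * ((2*k^2/(1-k^2)) * (r - 2*M) - M) / (y^2 - k^2)

noncomputable def firstIntegral₁ (M k : ℝ) (v : ℝ → ℝ) (r : ℝ) : ℝ :=
  Real.sign (v r) * (1 - (v r)^2) * |v r| ^ (2*k^2/(1-k^2))
    * r ^ (4*k^2/(1-k^2)) / (1 - 2*M/r)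

noncomputable def firstIntegral₂ (M : ℝ) (ρ v : ℝ → ℝ) (r : ℝ) : ℝ :=
  r * (r - 2*M) * ρ r * v r / (1 - (v r)^2)

variable {M k r : ℝ} {ρ v : ℝ → ℝ}

theorem hasDerivAt_firstIntegral₁ (hr : r ≠ 0) (hr2M : r - 2*M ≠ 0) (hk : k^2 ≠ 1)
    (hv0 : v r ≠ 0) (hvk : (v r)^2 ≠ k^2) (hv : HasDerivAt v (velocityRHS M k r (v r)) r) :
    HasDerivAt (firstIntegral₁ M k v) 0 r := by
  set a := 2*k^2/(1-k^2)
  have hsplit : firstIntegral₁ M k v =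
      fun t => (Real.sign (v t) * |v t| ^ a) * ((1 - (v t)^2) * t ^ (2*a) / (1 - 2*M/t)) := by
    funext t
    simp only [firstIntegral₁, a]
    ring_nf
  have hodd := (Real.hasDerivAt_sign_mul_abs_rpow hv0 a).comp r hv
  have hpow : HasDerivAt (fun t : ℝ => t ^ (2*a)) (2*a * r ^ (2*a - 1)) r :=
    Real.hasDerivAt_rpow_const (Or.inl hr)
  have hden : HasDerivAt (fun t : ℝ => 1 - 2*M/t) (2*M / r^2) r := by
    refine (((hasDerivAt_const r (2*M)).fun_div (hasDerivAt_id' r) hr).const_sub 1).congr_deriv ?_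
    ring
  have hden0 : 1 - 2*M/r ≠ 0 := by
    rw [one_sub_div hr]; exact div_ne_zero hr2M hr
  rw [hsplit]
  refine (hodd.fun_mul ((((hv.fun_pow 2).const_sub 1).fun_mul hpow).fun_div hden hden0)).congr_deriv
    ?_
  rw [Real.rpow_sub_one hr]
  have hk' : 1 - k^2 ≠ 0 := sub_ne_zero.mpr (Ne.symm hk)
  have hvk' : (v r)^2 - k^2 ≠ 0 := sub_ne_zero.mpr hvk
  simp only [Function.comp, velocityRHS, a]
  generalize Real.sign (v r) * |v r| ^ (2*k^2/(1-k^2)) = S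
  generalize r ^ (2 * (2*k^2/(1-k^2))) = Q
  field_simp
  ring

theorem hasDerivAt_firstIntegral₂ (hr : r ≠ 0) (hr2M : r - 2*M ≠ 0) (hv1 : 1 - (v r)^2 ≠ 0)
    (hvk : (v r)^2 ≠ k^2) (hv : HasDerivAt v (velocityRHS M k r (v r)) r)
    (hρ : HasDerivAt ρ (densityRHS M k r (v r) (ρ r)) r) :
    HasDerivAt (firstIntegral₂ M ρ v) 0 r := by
  have hquad : HasDerivAt (fun t : ℝ => t * (t - 2*M)) (r - 2*M + r) r := by
    refine ((hasDerivAt_id' r).fun_mul ((hasDerivAt_id' r).sub_const (2*M))).congr_deriv ?_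
    ring
  refine (((hquad.fun_mul hρ).fun_mul hv).fun_div ((hv.fun_pow 2).const_sub 1) hv1).congr_deriv ?_
  have hvk' : (v r)^2 - k^2 ≠ 0 := sub_ne_zero.mpr hvk
  simp only [velocityRHS, densityRHS]
  field_simp
  ring

end EulerSchwarzschild

theorem stmt10_general (M k : ℝ) (hM : 0 < M) (hk : k ∈ Set.Ioo (0:ℝ) 1)
    (s : Set ℝ) (hs : s ⊆ Set.Ioi (2*M)) (hconv : Convex ℝ s)
    (ρ v : ℝ → ℝ)
    (hvlt : ∀ r ∈ s, 0 < |v r| ∧ |v r| < 1)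
    (hvk : ∀ r ∈ s, |v r| ≠ k)
    (hv' : ∀ r ∈ s, HasDerivAt v
      (v r * ((1 - (v r)^2) * (1 - k^2)) / (r * (r - 2*M))
        * ((2*k^2/(1-k^2)) * (r - 2*M) - M) / ((v r)^2 - k^2)) r)
    (hρ' : ∀ r ∈ s, HasDerivAt ρ
      (-(2*(r - M)) / (r * (r - 2*M)) * ρ r
        - ρ r * ((1 + (v r)^2) * (1 - k^2)) / (r * (r - 2*M))
          * ((2*k^2/(1-k^2)) * (r - 2*M) - M) / ((v r)^2 - k^2)) r)
    (C₁ C₂ : ℝ → ℝ)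
    (hC₁ : ∀ r, C₁ r = Real.sign (v r) * (1 - (v r)^2) * |v r| ^ (2*k^2/(1-k^2))
      * r ^ (4*k^2/(1-k^2)) / (1 - 2*M/r))
    (hC₂ : ∀ r, C₂ r = r * (r - 2*M) * ρ r * v r / (1 - (v r)^2)) :
    ∀ r₁ ∈ s, ∀ r₂ ∈ s, C₁ r₁ = C₁ r₂ ∧ C₂ r₁ = C₂ r₂ := by
  obtain ⟨hk0, hk1⟩ := hk
  have hk2 : k^2 ≠ 1 := by nlinarith
  have hr : ∀ r ∈ s, r ≠ 0 ∧ r - 2*M ≠ 0 := fun r hrs => by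
    have h2M : 2*M < r := hs hrs
    exact ⟨by linarith, by linarith⟩
  have hv1 : ∀ r ∈ s, 1 - (v r)^2 ≠ 0 := fun r hrs => by
    nlinarith [(hvlt r hrs).2, sq_abs (v r), abs_nonneg (v r)]
  have hvk2 : ∀ r ∈ s, (v r)^2 ≠ k^2 := fun r hrs h =>
    hvk r hrs (by rw [← abs_of_pos hk0]; exact (sq_eq_sq_iff_abs_eq_abs _ _).mp h)
  obtain rfl : C₁ = EulerSchwarzschild.firstIntegral₁ M k v := funext hC₁
  obtain rfl : C₂ = EulerSchwarzschild.firstIntegral₂ M ρ v := funext hC₂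
  intro r₁ h₁ r₂ h₂
  refine ⟨hconv.eq_of_forall_hasDerivAt_zero (fun r hrs => ?_) h₁ h₂,
    hconv.eq_of_forall_hasDerivAt_zero (fun r hrs => ?_) h₁ h₂⟩
  · exact EulerSchwarzschild.hasDerivAt_firstIntegral₁ (hr r hrs).1 (hr r hrs).2 hk2
      (abs_pos.mp (hvlt r hrs).1) (hvk2 r hrs) (hv' r hrs)
  · exact EulerSchwarzschild.hasDerivAt_firstIntegral₂ (hr r hrs).1 (hr r hrs).2 (hv1 r hrs)
      (hvk2 r hrs) (hv' r hrs) (hρ' r hrs)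

/-- The quantities `C₁(r) = sign(v)(1-v²)|v|^{2k²/(1-k²)} r^{4k²/(1-k²)}/(1 - 2M/r)` and
`C₂(r) = r(r-2M)ρv/(1-v²)` are first integrals of the ODE system satisfied by smooth
stationary solutions `(ρ, v)` of the relativistic Euler–Schwarzschild model: they are
constant on any interval contained in `(2M, ∞)`. -/
theorem stmt10 (M k : ℝ) (hM : 0 < M) (hk : k ∈ Set.Ioo (0:ℝ) 1)
    (s : Set ℝ) (hs : s ⊆ Set.Ioi (2*M)) (hconv : Convex ℝ s)
    (ρ v : ℝ → ℝ)
    (hρpos : ∀ r ∈ s, 0 < ρ r)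
    (hvlt : ∀ r ∈ s, 0 < |v r| ∧ |v r| < 1)
    (hvk : ∀ r ∈ s, |v r| ≠ k)
    (hv' : ∀ r ∈ s, HasDerivAt v
      (v r * ((1 - (v r)^2) * (1 - k^2)) / (r * (r - 2*M))
        * ((2*k^2/(1-k^2)) * (r - 2*M) - M) / ((v r)^2 - k^2)) r)
    (hρ' : ∀ r ∈ s, HasDerivAt ρ
      (-(2*(r - M)) / (r * (r - 2*M)) * ρ r
        - ρ r * ((1 + (v r)^2) * (1 - k^2)) / (r * (r - 2*M))
          * ((2*k^2/(1-k^2)) * (r - 2*M) - M) / ((v r)^2 - k^2)) r)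
    (C₁ C₂ : ℝ → ℝ)
    (hC₁ : ∀ r, C₁ r = Real.sign (v r) * (1 - (v r)^2) * |v r| ^ (2*k^2/(1-k^2))
      * r ^ (4*k^2/(1-k^2)) / (1 - 2*M/r))
    (hC₂ : ∀ r, C₂ r = r * (r - 2*M) * ρ r * v r / (1 - (v r)^2)) :
    ∀ r₁ ∈ s, ∀ r₂ ∈ s, C₁ r₁ = C₁ r₂ ∧ C₂ r₁ = C₂ r₂ :=
  stmt10_general M k hM hk s hs hconv ρ v hvlt hvk hv' hρ' C₁ C₂ hC₁ hC₂
end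

section
/- Given states (ρ_L, v_L), (ρ_R, v_R) with ρ_L, ρ_R > 0 and v_L, v_R ∈ (-1,1), v_L ≠ v_R, the quadratic equation α v^2 + β v + γ = 0 with α = ρ_R(1-v_L^2) - ρ_L(1-v_R^2), β = -2(ρ_R v_R(1-v_L^2) - ρ_L v_L(1-v_R^2)), γ = ρ_R v_R^2(1-v_L^2) - ρ_L v_L^2(1-v_R^2) has discriminant D = 4 ρ_L ρ_R (1-v_L^2)(1-v_R^2)(v_R - v_L)^2 > 0. -/
theorem discrim_roe_quadratic {R : Type*} [CommRing R] (ρL ρR vL vR : R) :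
    discrim (ρR * (1 - vL ^ 2) - ρL * (1 - vR ^ 2))
        (-(2 * (ρR * vR * (1 - vL ^ 2) - ρL * vL * (1 - vR ^ 2))))
        (ρR * vR ^ 2 * (1 - vL ^ 2) - ρL * vL ^ 2 * (1 - vR ^ 2)) =
      4 * ρL * ρR * (1 - vL ^ 2) * (1 - vR ^ 2) * (vR - vL) ^ 2 := by
  unfold discrim
  ring

theorem one_sub_sq_pos_of_mem_Ioo {v : ℝ} (hv : v ∈ Set.Ioo (-1 : ℝ) 1) : 0 < 1 - v ^ 2 :=
  sub_pos.2 (sq_lt_one_iff_abs_lt_one v |>.2 (abs_lt.2 hv))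

/-- The quadratic `αv² + βv + γ = 0` arising from the Roe-type property for the
Euler–Schwarzschild model has discriminant
`D = 4ρ_Lρ_R(1-v_L²)(1-v_R²)(v_R - v_L)² > 0` whenever `ρ_L, ρ_R > 0`,
`v_L, v_R ∈ (-1,1)` and `v_L ≠ v_R`. -/
theorem stmt12 (ρL ρR vL vR : ℝ) (hρL : 0 < ρL) (hρR : 0 < ρR)
    (hvL : vL ∈ Set.Ioo (-1 : ℝ) 1) (hvR : vR ∈ Set.Ioo (-1 : ℝ) 1)
    (hne : vL ≠ vR)
    (α β γ : ℝ)
    (hα : α = ρR * (1 - vL^2) - ρL * (1 - vR^2))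
    (hβ : β = -(2 * (ρR * vR * (1 - vL^2) - ρL * vL * (1 - vR^2))))
    (hγ : γ = ρR * vR^2 * (1 - vL^2) - ρL * vL^2 * (1 - vR^2)) :
    β^2 - 4*α*γ = 4 * ρL * ρR * (1 - vL^2) * (1 - vR^2) * (vR - vL)^2 ∧
    0 < β^2 - 4*α*γ := by
  have hD : discrim α β γ = 4 * ρL * ρR * (1 - vL ^ 2) * (1 - vR ^ 2) * (vR - vL) ^ 2 := by
    subst hα hβ hγ
    exact discrim_roe_quadratic ρL ρR vL vR
  refine ⟨hD, ?_⟩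
  rw [← discrim, hD]
  have hgap : 0 < (vR - vL) ^ 2 := sq_pos_of_ne_zero (sub_ne_zero.2 hne.symm)
  have hwL := one_sub_sq_pos_of_mem_Ioo hvL
  have hwR := one_sub_sq_pos_of_mem_Ioo hvR
  exact mul_pos (mul_pos (mul_pos (mul_pos (mul_pos four_pos hρL) hρR) hwL) hwR) hgap
end

section
/- Under the assumptions ρ_L, ρ_R > 0, v_L, v_R ∈ (-1,1), α = ρ_R(1-v_L^2) - ρ_L(1-v_R^2) ≠ 0, and v_L < v_R, the root v_- = (ρ_R v_R(1-v_L^2) - ρ_L v_L(1-v_R^2) - |v_R - v_L|·sqrt(ρ_L ρ_R (1-v_L^2)(1-v_R^2)))/(ρ_R(1-v_L^2) - ρ_L(1-v_R^2)) lies strictly between v_L and v_R. -/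
/-! Write `a = √(ρ_R(1-v_L²))` and `b = √(ρ_L(1-v_R²))`. Then `α = a² - b²` and the square root in
`v₋` is `a b`, so the numerator factors through `a - b` and `v₋ = (a v_R + b v_L)/(a + b)`:
a weighted mean of `v_L` and `v_R` with positive weights. -/

lemma weighted_mean_mem_Ioo {x y a b : ℝ} (hxy : x < y) (ha : 0 < a) (hb : 0 < b) :
    (a * y + b * x) / (a + b) ∈ Set.Ioo x y := by
  constructor
  · rw [lt_div_iff₀ (by positivity)]
    nlinarith
  · rw [div_lt_iff₀ (by positivity)]
    nlinarith

lemma div_sq_sub_sq_eq_weighted_mean {K : Type*} [Field K] {a b : K} (x y : K)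
    (hab : a ^ 2 - b ^ 2 ≠ 0) :
    (a ^ 2 * y - b ^ 2 * x - (y - x) * (a * b)) / (a ^ 2 - b ^ 2) = (a * y + b * x) / (a + b) := by
  have hsum : a + b ≠ 0 := fun h => hab (by linear_combination (a - b) * h)
  rw [div_eq_div_iff hab hsum]
  ring

/-- If `ρ_L, ρ_R > 0`, `v_L, v_R ∈ (-1,1)`, `α ≠ 0` and `v_L < v_R`, then the root
`v₋ = (ρ_R v_R(1-v_L²) - ρ_L v_L(1-v_R²) - |v_R - v_L|√(ρ_Lρ_R(1-v_L²)(1-v_R²)))/α`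
lies strictly between `v_L` and `v_R`. -/
theorem stmt13 (ρL ρR vL vR : ℝ) (hρL : 0 < ρL) (hρR : 0 < ρR)
    (hvL : vL ∈ Set.Ioo (-1 : ℝ) 1) (hvR : vR ∈ Set.Ioo (-1 : ℝ) 1)
    (hα : ρR * (1 - vL^2) - ρL * (1 - vR^2) ≠ 0)
    (hlt : vL < vR)
    (vm : ℝ)
    (hvm : vm = (ρR * vR * (1 - vL^2) - ρL * vL * (1 - vR^2)
        - |vR - vL| * Real.sqrt (ρL * ρR * (1 - vL^2) * (1 - vR^2)))
      / (ρR * (1 - vL^2) - ρL * (1 - vR^2))) :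
    vL < vm ∧ vm < vR := by
  have hA : 0 < ρR * (1 - vL ^ 2) := mul_pos hρR (by nlinarith [hvL.1, hvL.2])
  have hB : 0 < ρL * (1 - vR ^ 2) := mul_pos hρL (by nlinarith [hvR.1, hvR.2])
  set a := √(ρR * (1 - vL ^ 2))
  set b := √(ρL * (1 - vR ^ 2))
  have ha2 : a ^ 2 = ρR * (1 - vL ^ 2) := Real.sq_sqrt hA.le
  have hb2 : b ^ 2 = ρL * (1 - vR ^ 2) := Real.sq_sqrt hB.le
  have hab : √(ρL * ρR * (1 - vL ^ 2) * (1 - vR ^ 2)) = a * b := by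
    rw [← Real.sqrt_mul hA.le]
    ring_nf
  have hvm_ab : vm = (a ^ 2 * vR - b ^ 2 * vL - (vR - vL) * (a * b)) / (a ^ 2 - b ^ 2) := by
    rw [hvm, abs_of_pos (sub_pos.2 hlt), hab, ha2, hb2]
    ring
  rw [hvm_ab, div_sq_sub_sq_eq_weighted_mean vL vR (by rwa [ha2, hb2])]
  exact weighted_mean_mem_Ioo hlt (Real.sqrt_pos.2 hA) (Real.sqrt_pos.2 hB)
end

section
/- For M > 0 and 0 ≤ x < 1, the function f(x,r) = r·sqrt(1 - x(1 - 2M/r)) + (xM/sqrt(1-x))·log(x(M-r) + r + sqrt(1-x)·r·sqrt(1 - x(1 - 2M/r))) satisfies ∂f/∂r (x,r) = sqrt(1 - x(1 - 2M/r)) for all r > 2M with 1 - x(1 - 2M/r) > 0. -/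
/-!
Write `s = √(a + 2c/r)`, so that `u = r s = √(a r² + 2 c r)` and `u' = (a r + c)/u = s - c/u`.
The argument `h = c + a r + √a u` of the logarithm satisfies `h' = √a h / u`, so the logarithmic
term contributes `(c / √a) · √a / u = c / u`, which cancels the `-c / u` in `u'`.
-/

namespace Real

lemma mul_sqrt_add_div_sq {a c r : ℝ} (hr : r ≠ 0) (hs : 0 ≤ a + 2 * c / r) :
    r * √(a + 2 * c / r) ^ 2 = a * r + 2 * c := by
  rw [sq_sqrt hs]
  field_simp

lemma hasDerivAt_mul_sqrt_add_div {a c r : ℝ} (hr : 0 < r) (hs : 0 < a + 2 * c / r) :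
    HasDerivAt (fun t => t * √(a + 2 * c / t)) ((a * r + c) / (r * √(a + 2 * c / r))) r := by
  have hinner : HasDerivAt (fun t => a + 2 * c / t) (-(2 * c) / r ^ 2) r := by
    simpa [div_eq_mul_inv] using ((hasDerivAt_inv hr.ne').const_mul (2 * c)).const_add a
  refine ((hasDerivAt_id r).mul (hinner.sqrt hs.ne')).congr_deriv ?_
  have hsq := mul_sqrt_add_div_sq hr.ne' hs.le
  have hpos : 0 < √(a + 2 * c / r) := sqrt_pos.mpr hs
  generalize √(a + 2 * c / r) = s at hsq hpos ⊢
  simp only [id]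
  field_simp
  linear_combination hsq

lemma hasDerivAt_log_add_mul_sqrt_add_div {a c r : ℝ} (ha : 0 < a) (hc : 0 ≤ c) (hr : 0 < r) :
    HasDerivAt (fun t => log (c + a * t + √a * (t * √(a + 2 * c / t))))
      (√a / (r * √(a + 2 * c / r))) r := by
  have hs : 0 < a + 2 * c / r := by positivity
  have hh : 0 < c + a * r + √a * (r * √(a + 2 * c / r)) := by positivity
  have hu := hasDerivAt_mul_sqrt_add_div hr hs
  refine ((((hasDerivAt_id r).const_mul a).const_add c).add
    (hu.const_mul √a)).log hh.ne' |>.congr_deriv ?_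
  have hq2 : √a ^ 2 = a := sq_sqrt ha.le
  have hs0 : 0 < √(a + 2 * c / r) := sqrt_pos.mpr hs
  simp only [id, Pi.add_apply]
  generalize √(a + 2 * c / r) = s at hh hs0 ⊢
  generalize √a = q at hq2 hh ⊢
  rw [div_eq_div_iff hh.ne' (by positivity)]
  field_simp
  linear_combination (-r * s) * hq2

theorem hasDerivAt_primitive_sqrt_add_div {a c r : ℝ} (ha : 0 < a) (hc : 0 ≤ c) (hr : 0 < r) :
    HasDerivAt (fun t => t * √(a + 2 * c / t)
        + c / √a * log (c + a * t + √a * (t * √(a + 2 * c / t))))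
      (√(a + 2 * c / r)) r := by
  have hs : 0 < a + 2 * c / r := by positivity
  refine ((hasDerivAt_mul_sqrt_add_div hr hs).add
    ((hasDerivAt_log_add_mul_sqrt_add_div ha hc hr).const_mul (c / √a))).congr_deriv ?_
  have hsq := mul_sqrt_add_div_sq hr.ne' hs.le
  have hs0 : 0 < √(a + 2 * c / r) := sqrt_pos.mpr hs
  generalize √(a + 2 * c / r) = s at hsq hs0 ⊢
  field_simp
  linear_combination -hsq

end Real

/-- For `M > 0` and `0 ≤ x < 1`, the function
`f(x,r) = r√(1 - x(1 - 2M/r)) + (xM/√(1-x))·log(x(M-r) + r + √(1-x)·r·√(1 - x(1 - 2M/r)))`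
is a primitive in `r` of `√(1 - x(1 - 2M/r))` for `r > 2M` with `1 - x(1 - 2M/r) > 0`. -/
theorem stmt14 (M x : ℝ) (hM : 0 < M) (hx0 : 0 ≤ x) (hx1 : x < 1)
    (f : ℝ → ℝ)
    (hf : ∀ r, f r = r * Real.sqrt (1 - x * (1 - 2*M/r))
      + x*M/Real.sqrt (1 - x)
        * Real.log (x*(M - r) + r
            + Real.sqrt (1 - x) * r * Real.sqrt (1 - x * (1 - 2*M/r)))) :
    ∀ r, 2*M < r → 0 < 1 - x * (1 - 2*M/r) →
      HasDerivAt f (Real.sqrt (1 - x * (1 - 2*M/r))) r := by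
  intro r hr _
  have hg : ∀ t : ℝ, 1 - x * (1 - 2 * M / t) = (1 - x) + 2 * (x * M) / t := fun t => by ring
  have hf' : f = fun t => t * √((1 - x) + 2 * (x * M) / t) + x * M / √(1 - x)
      * Real.log (x * M + (1 - x) * t + √(1 - x) * (t * √((1 - x) + 2 * (x * M) / t))) := by
    funext t
    rw [hf, hg]
    ring_nf
  rw [hf', hg]
  exact Real.hasDerivAt_primitive_sqrt_add_div (by linarith) (by positivity) (by linarith)
end

section
/- For the Euler–Schwarzschild model, the map from (ρ, v) with ρ > 0 and v ∈ (-1,1)\{0} to the conserved variables V^0 = ρ(1 + k^2 v^2)/(1 - v^2), V^1 = ρ v(1 + k^2)/(1 - v^2) is inverted by v = (1 + k^2 - sqrt((1+k^2)^2 - 4k^2 (V^1/V^0)^2))/(2k^2 V^1/V^0) and ρ = V^1(1 - v^2)/(v(1 + k^2)). -/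
/-!
The ratio `V¹/V⁰ = v(1 + k²)/(1 + k²v²)` depends on `v` alone, and for this ratio the
discriminant `(1 + k²)² - 4k²(V¹/V⁰)²` is the perfect square `((1 + k²)(1 - k²v²)/(1 + k²v²))²`,
whose base is nonnegative when `k²v² ≤ 1`. Substituting the square root, the velocity formula
collapses to `v`; then `ρ` is read off `V¹`.
-/

namespace EulerSchwarzschild

lemma conserved_ratio_eq {k ρ v : ℝ} (hρ : ρ ≠ 0) (hv : 1 - v ^ 2 ≠ 0) :
    (ρ * v * (1 + k ^ 2) / (1 - v ^ 2)) / (ρ * (1 + k ^ 2 * v ^ 2) / (1 - v ^ 2))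
      = v * (1 + k ^ 2) / (1 + k ^ 2 * v ^ 2) := by
  have : 1 + k ^ 2 * v ^ 2 ≠ 0 := by positivity
  field_simp

lemma discriminant_eq_sq (k v : ℝ) :
    (1 + k ^ 2) ^ 2 - 4 * k ^ 2 * (v * (1 + k ^ 2) / (1 + k ^ 2 * v ^ 2)) ^ 2
      = ((1 + k ^ 2) * (1 - k ^ 2 * v ^ 2) / (1 + k ^ 2 * v ^ 2)) ^ 2 := by
  have : 1 + k ^ 2 * v ^ 2 ≠ 0 := by positivity
  field_simp
  ring

lemma sqrt_discriminant_eq {k v : ℝ} (hkv : k ^ 2 * v ^ 2 ≤ 1) :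
    √((1 + k ^ 2) ^ 2 - 4 * k ^ 2 * (v * (1 + k ^ 2) / (1 + k ^ 2 * v ^ 2)) ^ 2)
      = (1 + k ^ 2) * (1 - k ^ 2 * v ^ 2) / (1 + k ^ 2 * v ^ 2) := by
  rw [discriminant_eq_sq, Real.sqrt_sq]
  have : 0 ≤ 1 - k ^ 2 * v ^ 2 := by linarith
  positivity

/-- The root of `k² r v² - (1 + k²) v + r = 0` with the minus sign inverts
`v ↦ r = v(1 + k²)/(1 + k²v²)` on `k²v² ≤ 1`. -/
lemma velocity_formula_eq {k v : ℝ} (hk : k ≠ 0) (hv : v ≠ 0) (hkv : k ^ 2 * v ^ 2 ≤ 1) :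
    (1 + k ^ 2 - √((1 + k ^ 2) ^ 2 - 4 * k ^ 2 * (v * (1 + k ^ 2) / (1 + k ^ 2 * v ^ 2)) ^ 2))
        / (2 * k ^ 2 * (v * (1 + k ^ 2) / (1 + k ^ 2 * v ^ 2))) = v := by
  rw [sqrt_discriminant_eq hkv]
  have : 1 + k ^ 2 * v ^ 2 ≠ 0 := by positivity
  have : 1 + k ^ 2 ≠ 0 := by positivity
  field_simp
  ring

end EulerSchwarzschild

open EulerSchwarzschild in
/-- The map `(ρ, v) ↦ (V⁰, V¹)` to the conserved variables of the Euler–Schwarzschild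
model, `V⁰ = ρ(1 + k²v²)/(1 - v²)` and `V¹ = ρv(1 + k²)/(1 - v²)`, is inverted by
`v = (1 + k² - √((1+k²)² - 4k²(V¹/V⁰)²))/(2k²V¹/V⁰)` and `ρ = V¹(1 - v²)/(v(1 + k²))`. -/
theorem stmt17 (k ρ v : ℝ) (hk : k ∈ Set.Ioo (0:ℝ) 1) (hρ : 0 < ρ)
    (hv : v ∈ Set.Ioo (-1 : ℝ) 1) (hv0 : v ≠ 0)
    (V0 V1 : ℝ)
    (hV0 : V0 = ρ * (1 + k^2 * v^2) / (1 - v^2))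
    (hV1 : V1 = ρ * v * (1 + k^2) / (1 - v^2)) :
    0 ≤ (1 + k^2)^2 - 4*k^2*(V1/V0)^2 ∧
    (1 + k^2 - Real.sqrt ((1 + k^2)^2 - 4*k^2*(V1/V0)^2)) / (2*k^2*(V1/V0)) = v ∧
    V1 * (1 - v^2) / (v * (1 + k^2)) = ρ := by
  obtain ⟨hk0, hk1⟩ := hk
  have hv2 : v ^ 2 < 1 := by rw [sq_lt_one_iff_abs_lt_one, abs_lt]; exact hv
  have hkv : k ^ 2 * v ^ 2 ≤ 1 := by nlinarith
  have h1v : 1 - v ^ 2 ≠ 0 := by linarith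
  have hratio : V1 / V0 = v * (1 + k ^ 2) / (1 + k ^ 2 * v ^ 2) := by
    rw [hV0, hV1]; exact conserved_ratio_eq hρ.ne' h1v
  refine ⟨?_, ?_, ?_⟩
  · rw [hratio, discriminant_eq_sq]; positivity
  · rw [hratio]; exact velocity_formula_eq hk0.ne' hv0 hkv
  · have : 1 + k ^ 2 ≠ 0 := by positivity
    rw [hV1]; field_simp
end

section
/- Given a supersonic state with velocity v_- ∈ (k, 1) and density ρ_- > 0, the state defined by v_+ = k^2/v_- and ρ_+ = ρ_-(v_-^2 - k^4)/(k^2(1 - v_-^2)) is subsonic (i.e. v_+ ∈ (0, k)) with ρ_+ > 0, and the flux vector F̂(ρ,v) = ((1+k^2)ρv/(1-v^2), (v^2+k^2)ρ/(1-v^2)) takes the same value at (ρ_-, v_-) and (ρ_+, v_+). -/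
/-!
Writing `v₊ = k²/v₋`, one has `1 - v₊² = (v₋² - k⁴)/v₋²`, and the density `ρ₊` is chosen exactly so
that this factor cancels: the mass flux `ρv/(1-v²)` is then the same at both states, and
`(v₊² + k²)/v₊ = (k² + v₋²)/v₋` gives the second component. Positivity is the chain
`k⁴ < k² < k < v₋ < 1`.
-/

open Set

section Algebra

variable {K : Type*} [Field K]

-- The paper's `v₊` and `ρ₊` as functions of the supersonic state `(ρ₋, v₋) = (ρ, v)`.
def shockVelocity (k v : K) : K := k ^ 2 / v

def shockDensity (k ρ v : K) : K := ρ * (v ^ 2 - k ^ 4) / (k ^ 2 * (1 - v ^ 2))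

theorem one_sub_shockVelocity_sq {k v : K} (hv : v ≠ 0) :
    1 - shockVelocity k v ^ 2 = (v ^ 2 - k ^ 4) / v ^ 2 := by
  unfold shockVelocity
  field_simp

variable {k ρ v : K} (hk : k ≠ 0) (hv : v ≠ 0) (hv1 : 1 - v ^ 2 ≠ 0) (hvk : v ^ 2 - k ^ 4 ≠ 0)
include hk hv hv1 hvk

theorem mass_flux_shock_eq :
    (1 + k ^ 2) * ρ * v / (1 - v ^ 2) =
      (1 + k ^ 2) * shockDensity k ρ v * shockVelocity k v / (1 - shockVelocity k v ^ 2) := by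
  rw [one_sub_shockVelocity_sq hv]
  unfold shockDensity shockVelocity
  field_simp

theorem momentum_flux_shock_eq :
    (v ^ 2 + k ^ 2) * ρ / (1 - v ^ 2) =
      (shockVelocity k v ^ 2 + k ^ 2) * shockDensity k ρ v / (1 - shockVelocity k v ^ 2) := by
  rw [one_sub_shockVelocity_sq hv]
  unfold shockDensity shockVelocity
  field_simp
  ring

end Algebra

section Order

variable {K : Type*} [Field K] [LinearOrder K] [IsStrictOrderedRing K] {k ρ v : K}

theorem shockVelocity_mem_Ioo (hk : 0 < k) (hkv : k < v) : shockVelocity k v ∈ Ioo 0 k := by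
  have hv : 0 < v := hk.trans hkv
  refine ⟨by unfold shockVelocity; positivity, ?_⟩
  rw [shockVelocity, div_lt_iff₀ hv, sq]
  exact mul_lt_mul_of_pos_left hkv hk

theorem pow_four_lt_sq_of_lt_of_lt_one (hk : 0 < k) (hkv : k < v) (hv1 : v < 1) : k ^ 4 < v ^ 2 := by
  have hk1 : k < 1 := hkv.trans hv1
  calc k ^ 4 = (k ^ 2) ^ 2 := by ring
    _ < v ^ 2 := by gcongr; nlinarith

theorem shockDensity_pos (hk : 0 < k) (hkv : k < v) (hv1 : v < 1) (hρ : 0 < ρ) :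
    0 < shockDensity k ρ v := by
  have hvk : 0 < v ^ 2 - k ^ 4 := sub_pos.2 (pow_four_lt_sq_of_lt_of_lt_one hk hkv hv1)
  have hv : 0 < 1 - v ^ 2 := by nlinarith
  unfold shockDensity
  positivity

end Order

/-- A standing (zero-speed) shock of the Euler–Schwarzschild model: given a supersonic
state `v₋ ∈ (k,1)`, `ρ₋ > 0`, the state `v₊ = k²/v₋`, `ρ₊ = ρ₋(v₋² - k⁴)/(k²(1 - v₋²))`
is subsonic with positive density, and both components of the reduced flux
`F̂(ρ,v) = ((1+k²)ρv/(1-v²), (v²+k²)ρ/(1-v²))` coincide at the two states. -/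
theorem stmt19 (k ρm vm : ℝ) (hk : k ∈ Set.Ioo (0:ℝ) 1)
    (hvm : vm ∈ Set.Ioo k 1) (hρm : 0 < ρm)
    (vp ρp : ℝ) (hvp : vp = k^2/vm)
    (hρp : ρp = ρm * (vm^2 - k^4) / (k^2 * (1 - vm^2))) :
    vp ∈ Set.Ioo (0:ℝ) k ∧ 0 < ρp ∧
    (1 + k^2) * ρm * vm / (1 - vm^2) = (1 + k^2) * ρp * vp / (1 - vp^2) ∧
    (vm^2 + k^2) * ρm / (1 - vm^2) = (vp^2 + k^2) * ρp / (1 - vp^2) := by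
  obtain ⟨hk0, -⟩ := hk
  obtain ⟨hkv, hv1⟩ := hvm
  change vp = shockVelocity k vm at hvp
  change ρp = shockDensity k ρm vm at hρp
  subst hvp hρp
  have hvm0 : vm ≠ 0 := (hk0.trans hkv).ne'
  have hvm1 : 1 - vm ^ 2 ≠ 0 := by nlinarith
  have hvmk : vm ^ 2 - k ^ 4 ≠ 0 := (sub_pos.2 (pow_four_lt_sq_of_lt_of_lt_one hk0 hkv hv1)).ne'
  exact ⟨shockVelocity_mem_Ioo hk0 hkv, shockDensity_pos hk0 hkv hv1 hρm,
    mass_flux_shock_eq hk0.ne' hvm0 hvm1 hvmk, momentum_flux_shock_eq hk0.ne' hvm0 hvm1 hvmk⟩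
end
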